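/- arXiv:0911.0578 — 5 statements merged into one kernel-verified Lean document; each statement's English description precedes it below -/
import Mathlib

section
/- Under the hypotheses of the previous abstract setting: for any w ∈ W and simple reflections u_1,…,u_d ∈ S, one has w P u_1⋯u_d ⊆ ⋃ B w u_{l_1}⋯u_{l_p} P and u_1⋯u_d B w ⊆ ⋃ B u_{l_1}⋯u_{l_p} w P, where the unions run over all strictly increasing sequences (l_1,…,l_p) in {1,…,d} (including the empty sequence). -/
/-!
Both inclusions follow by induction on `d`, peeling off the first letter `u_1`. For the first
one the left side is enlarged to `B w P u_1⋯u_d`: the rule for `w P u_1` gives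
`B w P ∪ B w u_1 P`, and the induction hypothesis applies to both `w` and `w u_1`. For the
second one the rule for `u_1 B v` is applied to each `B v P` produced by the induction
hypothesis. The two resulting families are indexed by the subsets of `{2,…,d}` without and
with `1`.
-/

open scoped Pointwise

namespace Finset

theorem prod_map_sort_map_succEmb {M : Type*} [Monoid M] {d : ℕ} (u : Fin (d + 1) → M)
    (t : Finset (Fin d)) :
    (((t.map (Fin.succEmb d)).sort (· ≤ ·)).map u).prod =
      ((t.sort (· ≤ ·)).map fun i => u i.succ).prod := by
  rw [← StrictMonoOn.map_finsetSort (f := Fin.succEmb d) _ (Fin.strictMono_succ.strictMonoOn _),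
    List.map_map]
  rfl

theorem prod_map_sort_insert_zero_map_succEmb {M : Type*} [Monoid M] {d : ℕ}
    (u : Fin (d + 1) → M) (t : Finset (Fin d)) :
    (((insert 0 (t.map (Fin.succEmb d))).sort (· ≤ ·)).map u).prod =
      u 0 * ((t.sort (· ≤ ·)).map fun i => u i.succ).prod := by
  have h0 : (0 : Fin (d + 1)) ∉ t.map (Fin.succEmb d) := by
    simp [Fin.succ_ne_zero]
  rw [sort_insert _ (fun b _ => Fin.zero_le b) h0, List.map_cons, List.prod_cons,
    prod_map_sort_map_succEmb]

end Finset

/-- A subset of `Fin (d + 1)` either omits `0` or contains it. -/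
theorem iUnion_finset_fin_succ_supset {M α : Type*} [Monoid M] {d : ℕ} (u : Fin (d + 1) → M)
    (F : M → Set α) :
    (⋃ t : Finset (Fin d), F ((t.sort (· ≤ ·)).map fun i => u i.succ).prod) ∪
        (⋃ t : Finset (Fin d), F (u 0 * ((t.sort (· ≤ ·)).map fun i => u i.succ).prod)) ⊆
      ⋃ t : Finset (Fin (d + 1)), F ((t.sort (· ≤ ·)).map u).prod := by
  refine Set.union_subset (Set.iUnion_subset fun t => ?_) (Set.iUnion_subset fun t => ?_)
  · refine Set.subset_iUnion_of_subset (t.map (Fin.succEmb d)) ?_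
    rw [Finset.prod_map_sort_map_succEmb]
  · refine Set.subset_iUnion_of_subset (insert 0 (t.map (Fin.succEmb d))) ?_
    rw [Finset.prod_map_sort_insert_zero_map_succEmb]

namespace Subgroup

variable {G : Type*} [Group G] (B P : Subgroup G)

theorem coe_mul_coe_mul_mul_coe (X : Set G) :
    (B : Set G) * ((B : Set G) * X * (P : Set G)) = (B : Set G) * X * (P : Set G) := by
  rw [← mul_assoc, ← mul_assoc, coe_mul_coe]

theorem coe_mul_mul_coe_mul_coe (X : Set G) :
    (B : Set G) * X * (P : Set G) * (P : Set G) = (B : Set G) * X * (P : Set G) := by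
  rw [mul_assoc _ (P : Set G), coe_mul_coe]

theorem coe_mul_singleton_mul_coe_mul_singleton_subset {x y z : G}
    (h : {x} * (P : Set G) * {y} ⊆ (B : Set G) * {x} * P ∪ (B : Set G) * {z} * P) :
    (B : Set G) * {x} * P * {y} ⊆ (B : Set G) * {x} * P ∪ (B : Set G) * {z} * P := by
  calc (B : Set G) * {x} * P * {y} = (B : Set G) * ({x} * P * {y}) := by
        simp only [mul_assoc]
    _ ⊆ (B : Set G) * ((B : Set G) * {x} * P ∪ (B : Set G) * {z} * P) :=
        Set.mul_subset_mul_left h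
    _ = (B : Set G) * {x} * P ∪ (B : Set G) * {z} * P := by
        rw [Set.mul_union, coe_mul_coe_mul_mul_coe, coe_mul_coe_mul_mul_coe]

theorem singleton_mul_coe_mul_singleton_mul_coe_subset {x y z : G}
    (h : {x} * (B : Set G) * {y} ⊆ (B : Set G) * {y} * P ∪ (B : Set G) * {z} * P) :
    {x} * ((B : Set G) * {y} * P) ⊆ (B : Set G) * {y} * P ∪ (B : Set G) * {z} * P := by
  calc {x} * ((B : Set G) * {y} * P) = {x} * (B : Set G) * {y} * P := by
        simp only [mul_assoc]
    _ ⊆ ((B : Set G) * {y} * P ∪ (B : Set G) * {z} * P) * P :=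
        Set.mul_subset_mul_right h
    _ = (B : Set G) * {y} * P ∪ (B : Set G) * {z} * P := by
        rw [Set.union_mul, coe_mul_mul_coe_mul_coe, coe_mul_mul_coe_mul_coe]

end Subgroup

section Iterated

variable {G W : Type*} [Group G] [Monoid W] (B P : Subgroup G) (n : W → G) (S : Set W)

theorem coe_mul_singleton_mul_coe_mul_prod_ofFn_subset
    (hr1 : ∀ s ∈ S, ∀ w : W,
      ({n w} : Set G) * (P : Set G) * {n s} ⊆
        (B : Set G) * {n w} * (P : Set G) ∪ (B : Set G) * {n (w * s)} * (P : Set G))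
    {d : ℕ} (u : Fin d → W) (hu : ∀ k, u k ∈ S) (w : W) :
    (B : Set G) * {n w} * (P : Set G) * {(List.ofFn fun k => n (u k)).prod} ⊆
      ⋃ t : Finset (Fin d),
        (B : Set G) * {n (w * ((t.sort (· ≤ ·)).map u).prod)} * (P : Set G) := by
  induction d generalizing w with
  | zero =>
    refine Set.subset_iUnion_of_subset ∅ ?_
    simp
  | succ d ih =>
    have ih' := fun w => ih (fun i => u i.succ) (fun i => hu i.succ) w
    calc (B : Set G) * {n w} * (P : Set G) * {(List.ofFn fun k => n (u k)).prod}
        = (B : Set G) * {n w} * (P : Set G) * {n (u 0)} *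
            {(List.ofFn fun i : Fin d => n (u i.succ)).prod} := by
          rw [List.ofFn_succ, List.prod_cons, ← Set.singleton_mul_singleton]
          simp only [mul_assoc]
      _ ⊆ ((B : Set G) * {n w} * (P : Set G) ∪ (B : Set G) * {n (w * u 0)} * (P : Set G)) *
            {(List.ofFn fun i : Fin d => n (u i.succ)).prod} :=
          Set.mul_subset_mul_right
            (Subgroup.coe_mul_singleton_mul_coe_mul_singleton_subset B P (hr1 _ (hu 0) w))
      _ ⊆ _ := by
          rw [Set.union_mul]
          refine (Set.union_subset_union (ih' w) (ih' (w * u 0))).trans ?_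
          simp only [mul_assoc]
          exact iUnion_finset_fin_succ_supset u fun v => (B : Set G) * ({n (w * v)} * (P : Set G))

theorem prod_ofFn_mul_coe_mul_singleton_mul_coe_subset
    (hr2 : ∀ s ∈ S, ∀ w : W,
      ({n s} : Set G) * (B : Set G) * {n w} ⊆
        (B : Set G) * {n w} * (P : Set G) ∪ (B : Set G) * {n (s * w)} * (P : Set G))
    {d : ℕ} (u : Fin d → W) (hu : ∀ k, u k ∈ S) (w : W) :
    {(List.ofFn fun k => n (u k)).prod} * ((B : Set G) * {n w} * (P : Set G)) ⊆
      ⋃ t : Finset (Fin d),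
        (B : Set G) * {n (((t.sort (· ≤ ·)).map u).prod * w)} * (P : Set G) := by
  induction d with
  | zero =>
    refine Set.subset_iUnion_of_subset ∅ ?_
    simp
  | succ d ih =>
    calc {(List.ofFn fun k => n (u k)).prod} * ((B : Set G) * {n w} * (P : Set G))
        = {n (u 0)} * ({(List.ofFn fun i : Fin d => n (u i.succ)).prod} *
            ((B : Set G) * {n w} * (P : Set G))) := by
          rw [List.ofFn_succ, List.prod_cons, ← Set.singleton_mul_singleton]
          simp only [mul_assoc]
      _ ⊆ {n (u 0)} * ⋃ t : Finset (Fin d),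
            (B : Set G) * {n (((t.sort (· ≤ ·)).map fun i => u i.succ).prod * w)} *
              (P : Set G) :=
          Set.mul_subset_mul_left (ih (fun i => u i.succ) (fun i => hu i.succ))
      _ ⊆ _ := by
          rw [Set.mul_iUnion]
          refine (Set.iUnion_mono fun t =>
            Subgroup.singleton_mul_coe_mul_singleton_mul_coe_subset B P (hr2 _ (hu 0) _)).trans ?_
          rw [Set.iUnion_union_distrib]
          simp only [← mul_assoc]
          exact iUnion_finset_fin_succ_supset u fun v => (B : Set G) * {n (v * w)} * (P : Set G)

end Iterated

/-- under the rules `wPs ⊆ BwP ∪ BwsP` and `sBw ⊆ BwP ∪ BswP`,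
for any `w ∈ W` and simple reflections `u_1,…,u_d ∈ S` one has
`w P u_1⋯u_d ⊆ ⋃ B w u_{l₁}⋯u_{l_p} P` and
`u_1⋯u_d B w ⊆ ⋃ B u_{l₁}⋯u_{l_p} w P`, the unions running over all strictly
increasing sequences `(l₁,…,l_p)` in `{1,…,d}` (including the empty one). -/
theorem iterated_wPs_inclusion
    {G W : Type*} [Group G] [Group W]
    (B P : Subgroup G) (n : W → G) (S : Set W)
    (hr1 : ∀ s ∈ S, ∀ w : W,
      ({n w} : Set G) * (P : Set G) * {n s} ⊆
        (B : Set G) * {n w} * (P : Set G) ∪ (B : Set G) * {n (w * s)} * (P : Set G))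
    (hr2 : ∀ s ∈ S, ∀ w : W,
      ({n s} : Set G) * (B : Set G) * {n w} ⊆
        (B : Set G) * {n w} * (P : Set G) ∪ (B : Set G) * {n (s * w)} * (P : Set G))
    (d : ℕ) (u : Fin d → W) (hu : ∀ k, u k ∈ S) (w : W) :
    (({n w} : Set G) * (P : Set G) * {(List.ofFn fun k => n (u k)).prod} ⊆
        ⋃ t : Finset (Fin d),
          (B : Set G) * {n (w * ((t.sort (· ≤ ·)).map u).prod)} * (P : Set G)) ∧
    (({(List.ofFn fun k => n (u k)).prod} : Set G) * (B : Set G) * {n w} ⊆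
        ⋃ t : Finset (Fin d),
          (B : Set G) * {n (((t.sort (· ≤ ·)).map u).prod * w)} * (P : Set G)) := by
  constructor
  · refine subset_trans ?_ (coe_mul_singleton_mul_coe_mul_prod_ofFn_subset B P n S hr1 u hu w)
    gcongr
    exact Set.subset_mul_right _ B.one_mem
  · refine subset_trans ?_ (prod_ofFn_mul_coe_mul_singleton_mul_coe_subset B P n S hr2 u hu w)
    rw [mul_assoc]
    exact Set.mul_subset_mul_left (Set.subset_mul_left _ P.one_mem)
end

section
/- Let Φ be an irreducible root system with base {α_i : i ∈ Δ}, highest root α̃ = Σ n_i α_i, Weyl chamber 𝔠 = {x : ⟨x, α_i⟩ > 0 ∀i}, alcove C = {x ∈ 𝔠 : ⟨x, α̃⟩ < 1}, and conical cell 𝔠_I for I ⊆ Δ. Then the convex closure cl(C ∪ 𝔠_I), defined as the intersection of all closed affine half-spaces H⁺_{α,r} = {x : ⟨x,α⟩ + r ≥ 0} with α ∈ Φ, r ∈ ℤ, containing C ∪ 𝔠_I, equals ⋂_{α∈Δ} H⁺_{α,0} ∩ ⋂_{α∈Φ_I⁻} H⁺_{α,1}. -/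
/-- for an irreducible root system with highest root `α̃`,
the convex closure of `C ∪ 𝔠_I` — the intersection of all closed half-spaces
`H⁺_{α,r}` (`α ∈ Φ`, `r ∈ ℤ`) containing `C ∪ 𝔠_I` — equals
`⋂_{α∈Δ} H⁺_{α,0} ∩ ⋂_{α∈Φ_I⁻} H⁺_{α,1}`.  Coweights are written in
fundamental-coweight coordinates; roots in simple-root coordinates. -/
theorem convex_closure_of_alcove_union_conical_cell
    {ι : Type*} [Fintype ι] [DecidableEq ι]
    (Φ : Set (ι → ℤ)) (I : Set ι)
    (hsymm : ∀ c ∈ Φ, -c ∈ Φ)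
    (hpm : ∀ c ∈ Φ, (∀ k, 0 ≤ c k) ∨ (∀ k, c k ≤ 0))
    (hsimple : ∀ i, Pi.single i 1 ∈ Φ)
    (atilde : ι → ℤ) (hhigh : atilde ∈ Φ) (hn1 : ∀ i, 1 ≤ atilde i)
    (hbound : ∀ c ∈ Φ, ∀ i, -atilde i ≤ c i ∧ c i ≤ atilde i)
    (pair : (ι → ℝ) → (ι → ℤ) → ℝ)
    (hpair : ∀ x c, pair x c = ∑ i, x i * (c i : ℝ))
    (C : Set (ι → ℝ))
    (hC : C = {x | (∀ i, 0 < pair x (Pi.single i 1)) ∧ pair x atilde < 1})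
    (cI : Set (ι → ℝ))
    (hcI : cI = {x | (∀ i ∈ I, pair x (Pi.single i 1) = 0) ∧
                     ∀ i, i ∉ I → 0 < pair x (Pi.single i 1)})
    (H : (ι → ℤ) → ℤ → Set (ι → ℝ))
    (hH : ∀ α r, H α r = {x | 0 ≤ pair x α + (r : ℝ)})
    (ΦIneg : Set (ι → ℤ))
    (hΦIneg : ΦIneg = {c ∈ Φ | (∀ k, c k ≤ 0) ∧ ∀ k, k ∉ I → c k = 0}) :
    (⋂ q : {q : (ι → ℤ) × ℤ // q.1 ∈ Φ ∧ C ∪ cI ⊆ H q.1 q.2}, H q.1.1 q.1.2) =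
      (⋂ i : ι, H (Pi.single i 1) 0) ∩ ⋂ α ∈ ΦIneg, H α 1 := by
  classical
  have hsingle : ∀ (y : ι → ℝ) i, pair y (Pi.single i 1) = y i := by
    intro y i
    rw [hpair, Finset.sum_eq_single i]
    · simp
    · intro b _ hb; simp [Pi.single_apply, hb]
    · intro h; exact absurd (Finset.mem_univ i) h
  set N : ℝ := ∑ i, (atilde i : ℝ) with hNdef
  have hN : 0 ≤ N := Finset.sum_nonneg fun i _ => by
    exact_mod_cast le_trans zero_le_one (by exact_mod_cast hn1 i)
  have h2 : (0:ℝ) < 2*N+2 := by linarith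
  set ε : ℝ := 1/(2*N+2) with hεdef
  have hε : 0 < ε := by positivity
  have hεN : ε * N < 1 := by
    rw [hεdef, div_mul_eq_mul_div, one_mul, div_lt_one h2]; linarith
  set y0 : ι → ℝ := fun _ => ε with hy0def
  have hy0C : y0 ∈ C := by
    rw [hC]
    refine ⟨fun i => by rw [hsingle]; exact hε, ?_⟩
    rw [hpair]
    have : ∑ i, y0 i * (atilde i : ℝ) = ε * N := by
      rw [hNdef, Finset.mul_sum]
    rw [this]; exact hεN
  ext x
  simp only [Set.mem_inter_iff, Set.mem_iInter, Set.mem_setOf_eq]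
  constructor
  · rintro hx
    refine ⟨fun i => ?_, fun α hα => ?_⟩
    · -- x ∈ H (single i 1) 0
      refine hx ⟨(Pi.single i 1, 0), hsimple i, ?_⟩
      rintro y (hy | hy)
      · rw [hC] at hy
        rw [hH]
        simp only [Set.mem_setOf_eq, Int.cast_zero, add_zero]
        exact le_of_lt (hy.1 i)
      · rw [hcI] at hy
        rw [hH]
        simp only [Set.mem_setOf_eq, Int.cast_zero, add_zero]
        by_cases hiI : i ∈ I
        · rw [hy.1 i hiI]
        · exact le_of_lt (hy.2 i hiI)
    · -- x ∈ H α 1 for α ∈ ΦIneg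
      rw [hΦIneg] at hα
      obtain ⟨hαΦ, hαneg, hαI⟩ := hα
      refine hx ⟨(α, 1), hαΦ, ?_⟩
      rintro y (hy | hy)
      · rw [hC] at hy
        rw [hH]
        simp only [Set.mem_setOf_eq, Int.cast_one]
        have hterm : ∀ i ∈ Finset.univ, y i * (-(atilde i : ℝ)) ≤ y i * (α i : ℝ) := by
          intro i _
          have hyi : 0 < y i := by rw [← hsingle y i]; exact hy.1 i
          have : (-(atilde i) : ℝ) ≤ (α i : ℝ) := by exact_mod_cast (hbound α hαΦ i).1
          exact mul_le_mul_of_nonneg_left this (le_of_lt hyi)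
        have hsum : -(pair y atilde) ≤ pair y α := by
          rw [hpair, hpair, ← Finset.sum_neg_distrib]
          refine Finset.sum_le_sum ?_
          intro i hi
          have := hterm i hi
          linarith [hterm i hi]
        have := hy.2
        linarith
      · rw [hcI] at hy
        rw [hH]
        simp only [Set.mem_setOf_eq, Int.cast_one]
        have : pair y α = 0 := by
          rw [hpair]
          refine Finset.sum_eq_zero fun i _ => ?_
          by_cases hiI : i ∈ I
          · have : y i = 0 := by rw [← hsingle y i]; exact hy.1 i hiI
            rw [this, zero_mul]
          · rw [hαI i hiI]; simp
        rw [this]; norm_num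
  · rintro ⟨hx1, hx2⟩ ⟨⟨α, r⟩, hαΦ, hsub⟩
    rw [hH]
    simp only [Set.mem_setOf_eq]
    have hxnn : ∀ i, 0 ≤ x i := by
      intro i
      have := hx1 i
      rw [hH] at this
      simp only [Set.mem_setOf_eq, Int.cast_zero, add_zero] at this
      rw [← hsingle x i]; exact this
    -- constraint at y0
    have hy0con : 0 ≤ pair y0 α + (r : ℝ) := by
      have := hsub (Or.inl hy0C)
      rw [hH] at this; exact this
    have hy0α : pair y0 α = ε * ∑ i, (α i : ℝ) := by
      rw [hpair, Finset.mul_sum]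
    rcases hpm α hαΦ with hpos | hneg
    · -- α ≥ 0
      have hr0 : (0:ℤ) ≤ r := by
        have hle : pair y0 α ≤ ε * N := by
          rw [hy0α, hNdef, Finset.mul_sum, Finset.mul_sum]
          refine Finset.sum_le_sum fun i _ => ?_
          have : (α i : ℝ) ≤ (atilde i : ℝ) := by exact_mod_cast (hbound α hαΦ i).2
          exact mul_le_mul_of_nonneg_left this (le_of_lt hε)
        have : (-1 : ℝ) < (r : ℝ) := by linarith
        have : (-1:ℤ) < r := by exact_mod_cast this
        omega
      have hpx : 0 ≤ pair x α := by
        rw [hpair]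
        refine Finset.sum_nonneg fun i _ => ?_
        exact mul_nonneg (hxnn i) (by exact_mod_cast hpos i)
      have : (0:ℝ) ≤ (r:ℝ) := by exact_mod_cast hr0
      linarith
    · -- α ≤ 0
      by_cases hz : ∀ k, k ∉ I → α k = 0
      · -- α ∈ ΦIneg (or α = 0)
        by_cases h0 : ∀ k, α k = 0
        · have hpxα : pair x α = 0 := by
            rw [hpair]; exact Finset.sum_eq_zero fun i _ => by rw [h0 i]; simp
          have hpy0 : pair y0 α = 0 := by
            rw [hpair]; exact Finset.sum_eq_zero fun i _ => by rw [h0 i]; simp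
          rw [hpxα]; rw [hpy0] at hy0con; linarith
        · push_neg at h0
          obtain ⟨j, hj⟩ := h0
          have hαj : α j ≤ -1 := by
            have := hneg j
            omega
          -- pair y0 α ≤ -ε
          have hy0le : pair y0 α ≤ -ε := by
            rw [hy0α]
            have hsum : ∑ i, (α i : ℝ) ≤ (α j : ℝ) := by
              rw [← Finset.add_sum_erase _ _ (Finset.mem_univ j)]
              have : ∑ i ∈ Finset.univ.erase j, (α i : ℝ) ≤ 0 :=
                Finset.sum_nonpos fun i _ => by exact_mod_cast hneg i
              linarith
            have : ε * ∑ i, (α i : ℝ) ≤ ε * (α j : ℝ) :=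
              mul_le_mul_of_nonneg_left hsum (le_of_lt hε)
            have hj1 : (α j : ℝ) ≤ -1 := by exact_mod_cast hαj
            nlinarith
          have hr1 : (1:ℝ) ≤ (r:ℝ) := by
            have : (0:ℝ) < (r:ℝ) := by linarith
            have h' : (0:ℤ) < r := by exact_mod_cast this
            exact_mod_cast h'
          have hxα : 0 ≤ pair x α + 1 := by
            have hmem : α ∈ ΦIneg := by
              rw [hΦIneg]; exact ⟨hαΦ, hneg, hz⟩
            have := hx2 α hmem
            rw [hH] at this
            simpa using this
          linarith
      · -- ∃ k ∉ I with α k < 0 : contradiction with cI unbounded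
        push_neg at hz
        obtain ⟨k, hkI, hk⟩ := hz
        have hαk : α k ≤ -1 := by have := hneg k; omega
        exfalso
        set t : ℝ := |(r:ℝ)| + 1 with htdef
        have ht : 0 < t := by positivity
        set y1 : ι → ℝ := fun i => if i ∈ I then 0 else t with hy1def
        have hy1cI : y1 ∈ cI := by
          rw [hcI]
          constructor
          · intro i hiI; rw [hsingle]; simp [hy1def, hiI]
          · intro i hiI; rw [hsingle]; simp only [hy1def]
            rw [if_neg hiI]; exact ht
        have hcon : 0 ≤ pair y1 α + (r : ℝ) := by
          have := hsub (Or.inr hy1cI)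
          rw [hH] at this; exact this
        have hle : pair y1 α ≤ -t := by
          rw [hpair]
          have h1 : ∑ i, y1 i * (α i : ℝ) ≤ ∑ i ∈ {k}, y1 i * (α i : ℝ) := by
            rw [← Finset.add_sum_erase _ _ (Finset.mem_univ k), Finset.sum_singleton]
            have : ∑ i ∈ Finset.univ.erase k, y1 i * (α i : ℝ) ≤ 0 := by
              refine Finset.sum_nonpos fun i _ => ?_
              refine mul_nonpos_of_nonneg_of_nonpos ?_ ?_
              · simp only [hy1def]; split <;> [rfl; exact le_of_lt ht]
              · exact_mod_cast hneg i
            linarith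
          have h2 : ∑ i ∈ ({k} : Finset ι), y1 i * (α i : ℝ) = t * (α k : ℝ) := by
            rw [Finset.sum_singleton]
            simp [hy1def, hkI]
          have h3 : t * (α k : ℝ) ≤ t * (-1) := by
            refine mul_le_mul_of_nonneg_left ?_ (le_of_lt ht)
            exact_mod_cast hαk
          linarith
        have habs : (r:ℝ) ≤ |(r:ℝ)| := le_abs_self _
        linarith
end

section
/- Let Φ be a root system with base {α_i : i ∈ Δ} and let I ⊆ Δ be such that every positive root in Φ_I = ℤ-span roots of {α_i : i∈I} has all coefficients ≤ 1. Then for every j ∈ I, the translate ω_j + 𝔠_I of the conical cell 𝔠_I by the fundamental coweight ω_j is contained in cl(C ∪ 𝔠_I) = ⋂_{α∈Δ} H⁺_{α,0} ∩ ⋂_{α∈Φ_I⁻} H⁺_{α,1}. Conversely, if some positive root in Φ_I has a coefficient m_j ≥ 2 at some j ∈ I, then ω_j + 𝔠_I ⊄ cl(C ∪ 𝔠_I). -/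
/-- if every positive root of `Φ_I` has all coefficients `≤ 1`,
then for every `j ∈ I` the translate `ω_j + 𝔠_I` is contained in
`cl(C ∪ 𝔠_I) = ⋂_{α∈Δ} H⁺_{α,0} ∩ ⋂_{α∈Φ_I⁻} H⁺_{α,1}`; conversely, if some
positive root of `Φ_I` has coefficient `m_j ≥ 2` at some `j ∈ I`, then
`ω_j + 𝔠_I` is not contained in that set.  Coweights are written in
fundamental-coweight coordinates; roots in simple-root coordinates. -/
theorem coweight_translate_of_conical_cell_and_convex_closure
    {ι : Type*} [Fintype ι] [DecidableEq ι]
    (Φ : Set (ι → ℤ)) (I : Set ι)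
    (hsymm : ∀ c ∈ Φ, -c ∈ Φ)
    (hpm : ∀ c ∈ Φ, (∀ k, 0 ≤ c k) ∨ (∀ k, c k ≤ 0))
    (ΦI : Set (ι → ℤ)) (hΦI : ΦI = {c ∈ Φ | ∀ k, k ∉ I → c k = 0})
    (ΦIneg : Set (ι → ℤ)) (hΦIneg : ΦIneg = {c ∈ ΦI | ∀ k, c k ≤ 0})
    (pair : (ι → ℝ) → (ι → ℤ) → ℝ)
    (hpair : ∀ x c, pair x c = ∑ i, x i * (c i : ℝ))
    (ω : ι → ι → ℝ) (hω : ∀ j', ω j' = fun i => if i = j' then 1 else 0)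
    (cI : Set (ι → ℝ))
    (hcI : cI = {x | (∀ i ∈ I, pair x (Pi.single i 1) = 0) ∧
                     ∀ i, i ∉ I → 0 ≤ pair x (Pi.single i 1)})
    (cl : Set (ι → ℝ))
    (hcl : cl = (⋂ i : ι, {x | 0 ≤ pair x (Pi.single i 1)}) ∩
        ⋂ α ∈ ΦIneg, {x | 0 ≤ pair x α + 1}) :
    ((∀ c ∈ ΦI, (∀ k, 0 ≤ c k) → ∀ i ∈ I, c i ≤ 1) →
      ∀ j ∈ I, (fun x => ω j + x) '' cI ⊆ cl) ∧
    (∀ m ∈ ΦI, (∀ k, 0 ≤ m k) → ∀ j ∈ I, 2 ≤ m j →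
      ¬ (fun x => ω j + x) '' cI ⊆ cl) := by
  -- basic computations
  have hsingle : ∀ x i, pair x (Pi.single i 1) = x i := by
    intro x i
    rw [hpair]
    have : ∀ k, x k * ((Pi.single i 1 : ι → ℤ) k : ℝ) =
        if k = i then x k else 0 := by
      intro k
      by_cases h : k = i <;> simp [Pi.single_apply, h]
    simp [this]
  have hshift : ∀ (x : ι → ℝ) (j : ι) (c : ι → ℤ),
      pair (ω j + x) c = (c j : ℝ) + pair x c := by
    intro x j c
    rw [hpair, hpair, hω]
    have : ∀ k, ((fun i => if i = j then (1:ℝ) else 0) + x) k * (c k : ℝ) =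
        (if k = j then (c k : ℝ) else 0) + x k * (c k : ℝ) := by
      intro k
      by_cases h : k = j <;> simp [h, add_mul]
    rw [Finset.sum_congr rfl (fun k _ => this k), Finset.sum_add_distrib]
    simp
  -- pairing of cI element with root supported in I is 0
  have hzero : ∀ x ∈ cI, ∀ c ∈ ΦI, pair x c = 0 := by
    intro x hx c hc
    rw [hcI] at hx
    rw [hΦI] at hc
    rw [hpair]
    apply Finset.sum_eq_zero
    intro k _
    by_cases hk : k ∈ I
    · have := hx.1 k hk
      rw [hsingle] at this
      simp [this]
    · simp [hc.2 k hk]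
  constructor
  · intro hle j hj x hx
    obtain ⟨y, hy, rfl⟩ := hx
    rw [hcl]
    constructor
    · simp only [Set.mem_iInter, Set.mem_setOf_eq]
      intro i
      rw [hsingle]
      have hy' := hy
      rw [hcI] at hy'
      by_cases hi : i ∈ I
      · have := hy'.1 i hi
        rw [hsingle] at this
        rw [hω]
        simp [this]
        positivity
      · have := hy'.2 i hi
        rw [hsingle] at this
        rw [hω]
        by_cases h : i = j
        · exact absurd (h ▸ hj) hi
        · simp [h]; linarith
    · simp only [Set.mem_iInter, Set.mem_setOf_eq]
      intro α hα
      rw [hshift, hzero y hy α (by rw [hΦIneg] at hα; exact hα.1)]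
      have hα' := hα
      rw [hΦIneg] at hα'
      have hnegmem : -α ∈ ΦI := by
        rw [hΦI]
        have h1 := hα'.1
        rw [hΦI] at h1
        exact ⟨hsymm α h1.1, fun k hk => by simp [h1.2 k hk]⟩
      have h2 : (-α) j ≤ 1 := hle (-α) hnegmem (fun k => by simpa using hα'.2 k) j hj
      have : (-1 : ℤ) ≤ α j := by simp at h2; linarith
      have : (-1 : ℝ) ≤ (α j : ℝ) := by exact_mod_cast this
      linarith
  · intro m hm hmpos j hj hmj hsub
    have h0 : (0 : ι → ℝ) ∈ cI := by
      rw [hcI]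
      constructor <;> intro i _ <;> rw [hsingle] <;> simp
    have hωj : ω j + 0 ∈ cl := hsub ⟨0, h0, rfl⟩
    rw [hcl] at hωj
    have hneg : -m ∈ ΦIneg := by
      rw [hΦIneg]
      rw [hΦI] at hm ⊢
      exact ⟨⟨hsymm m hm.1, fun k hk => by simp [hm.2 k hk]⟩,
        fun k => by simpa using hmpos k⟩
    have := hωj.2
    simp only [Set.mem_iInter, Set.mem_setOf_eq] at this
    have h3 := this (-m) hneg
    rw [hshift] at h3
    have hz : pair 0 (-m) = 0 := by rw [hpair]; simp
    rw [hz] at h3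
    have : (2 : ℝ) ≤ (m j : ℝ) := by exact_mod_cast hmj
    simp at h3
    linarith
end

section
/- Let G be a group with a BN-pair with Weyl group W generated by simple reflections {s_i : i ∈ Δ}, Iwahori-type decompositions B_I = ∐_{w∈W_I} BwB. Suppose B admits Iwahori factorizations B = (B ∩ U_I⁻)(B ∩ P_I) and that w(B ∩ U⁻)w⁻¹ ⊆ B for all w ∈ W. Then B_I factors as B_I = (B ∩ U_I⁻)(B_I ∩ P_I). -/
open scoped Pointwise

/-- if `B_I = ∐_{w∈W_I} BwB`, `B` admits the Iwahori
factorizations `B = (B∩U_I⁻)(B∩P_I)` and `B = (B∩U⁻)(B∩P)`, conjugation by Weyl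
representatives sends `B∩U⁻` into `B` (so `BwB = Bw(B∩P)`), and
`(B∩P_I) w (B∩P) ⊆ B_I ∩ P_I` for `w ∈ W_I`, then
`B_I = (B ∩ U_I⁻)(B_I ∩ P_I)`. -/
theorem parahoric_iwahori_factorization
    {G W : Type*} [Group G] [Group W]
    (B BI P PI Um UIm : Subgroup G)
    (n : W → G) (WI : Set W)
    (hBI : (BI : Set G) = ⋃ w ∈ WI, (B : Set G) * {n w} * (B : Set G))
    (hIwI : (B : Set G) = ((B : Set G) ∩ (UIm : Set G)) * ((B : Set G) ∩ (PI : Set G)))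
    (hIw : (B : Set G) = ((B : Set G) ∩ (Um : Set G)) * ((B : Set G) ∩ (P : Set G)))
    (hwB : ∀ w : W, (fun g => n w * g * (n w)⁻¹) '' ((B : Set G) ∩ (Um : Set G)) ⊆ (B : Set G))
    (hBP : ∀ w ∈ WI,
      ((B : Set G) ∩ (PI : Set G)) * {n w} * ((B : Set G) ∩ (P : Set G)) ⊆
        (BI : Set G) ∩ (PI : Set G)) :
    (BI : Set G) = ((B : Set G) ∩ (UIm : Set G)) * ((BI : Set G) ∩ (PI : Set G)) := by
  -- WI is nonempty since 1 ∈ BI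
  have h1 : (1:G) ∈ (BI : Set G) := BI.one_mem
  rw [hBI] at h1
  simp only [Set.mem_iUnion] at h1
  obtain ⟨w0, hw0, -⟩ := h1
  -- n w0 ∈ BI
  have hnw0 : n w0 ∈ BI := by
    have hmem : (1:G) * n w0 * 1 ∈ ((B : Set G) ∩ PI) * {n w0} * ((B : Set G) ∩ P) :=
      Set.mul_mem_mul (Set.mul_mem_mul ⟨B.one_mem, PI.one_mem⟩ (Set.mem_singleton _))
        ⟨B.one_mem, P.one_mem⟩
    exact (hBP w0 hw0 (by simpa using hmem)).1
  -- B ⊆ BI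
  have hBsub : (B : Set G) ⊆ (BI : Set G) := by
    intro b hb
    have hmem : b * n w0 * 1 ∈ (B : Set G) * {n w0} * (B : Set G) :=
      Set.mul_mem_mul (Set.mul_mem_mul hb (Set.mem_singleton _)) B.one_mem
    have : b * n w0 ∈ (BI : Set G) := by
      rw [hBI]
      exact Set.mem_iUnion.2 ⟨w0, Set.mem_iUnion.2 ⟨hw0, by simpa using hmem⟩⟩
    have := BI.mul_mem this (BI.inv_mem hnw0)
    simpa using this
  apply Set.Subset.antisymm
  · -- forward inclusion
    intro g hg
    rw [hBI] at hg
    simp only [Set.mem_iUnion] at hg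
    obtain ⟨w, hwI, hg⟩ := hg
    obtain ⟨x, hx, b2, hb2, rfl⟩ := hg
    obtain ⟨b1, hb1, nn, hnn, rfl⟩ := hx
    rw [Set.mem_singleton_iff] at hnn; subst hnn
    -- factor b2 = v * q
    have hb2' := hIw ▸ hb2
    obtain ⟨v, hv, q, hq, rfl⟩ := hb2'
    -- conjugate v across n w
    have hconj : n w * v * (n w)⁻¹ ∈ (B : Set G) := hwB w ⟨v, hv, rfl⟩
    -- b1 * (n w * v * (n w)⁻¹) ∈ B, factor it via hIwI
    have hbb : b1 * (n w * v * (n w)⁻¹) ∈ (B : Set G) := B.mul_mem hb1 hconj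
    rw [hIwI] at hbb
    obtain ⟨u, hu, p, hp, hup⟩ := hbb
    have hkey : p * n w * q ∈ (BI : Set G) ∩ (PI : Set G) :=
      hBP w hwI (Set.mul_mem_mul (Set.mul_mem_mul hp (Set.mem_singleton _)) hq)
    have hup' : u * p = b1 * (n w * v * (n w)⁻¹) := hup
    have heq : b1 * n w * (v * q) = u * (p * n w * q) := by
      rw [show u * (p * n w * q) = u * p * (n w * q) by group, hup']; group
    show b1 * n w * (v * q) ∈ _
    rw [heq]
    exact Set.mul_mem_mul hu hkey
  · -- reverse inclusion
    intro g hg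
    obtain ⟨u, hu, p, hp, rfl⟩ := hg
    exact BI.mul_mem (hBsub hu.1) hp.1
end

section
/- Let G be a group with subgroups B ⊆ B_I and P_I such that: (i) B_I P_I = ∐_{g ∈ B_I/B} gBP (disjoint union), and (ii) the M[G]-module C^∞(G/P_I, M) is generated by the characteristic function χ_{B_I P_I}. Then the M[G]-module homomorphism H : C_c^∞(G/B, M) → C^∞(G/P, M), φ ↦ Σ_{g∈G/B} φ(g)·g(χ_{BP}), satisfies H(χ_{B_I}) = χ_{B_I P_I}, and the induced map H_I : C_c^∞(G/B_I, M) → C^∞(G/P_I, M) is a surjective homomorphism of M[G]-modules. -/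
/-!
Since `B * P` is stable under left multiplication by `B`, the translate `g • χ_{BP}` depends only
on the coset `gB`, so `H` is the `M`-linear combination of the translates `x • χ_{BP}`,
`x ∈ G ⧸ B`. This makes `H` linear and `G`-equivariant, and sends `χ_{B_I} = Σ_{g ∈ S} δ_{gB}` to
the sum of the indicators of the pairwise disjoint images of the `g B P`, i.e. to `χ_{B_I P_I}`.
The image of `H_I` is therefore the span of the translates of `χ_{B_I P_I}`, which contains every
locally constant function by (ii).
-/

open scoped Pointwise Classical

/-- `H : C_c^∞(G/B, M) → C^∞(G/P, M)`, `φ ↦ Σ_{g∈G/B} φ(g)·g(χ_{BP})`: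
compactly supported functions on `G/B` are finitely supported `M`-valued
functions, and `(g χ_{BP})(y) = χ_{BP}(g⁻¹y)`. -/
noncomputable def convMap {G : Type*} [Group G] (M : Type*) [CommRing M]
    (B P : Subgroup G) (φ : (G ⧸ B) →₀ M) : (G ⧸ P) → M := fun y =>
  ∑ x ∈ φ.support,
    if (Quotient.out x)⁻¹ • y ∈ (QuotientGroup.mk '' ((B : Set G) * (P : Set G)) : Set (G ⧸ P))
    then φ x else 0

namespace QuotientGroup

variable {G : Type*} [Group G] (N : Subgroup G)

lemma disjoint_image_mk_of_mul_subset {A A' : Set G} (hA' : A' * N ⊆ A') (h : Disjoint A A') :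
    Disjoint (mk '' A : Set (G ⧸ N)) (mk '' A') := by
  rw [Set.disjoint_left]
  rintro _ ⟨a, ha, rfl⟩ ⟨a', ha', he⟩
  have : a ∈ (mk ⁻¹' (mk '' A') : Set G) := ⟨a', ha', he⟩
  rw [preimage_image_mk_eq_mul] at this
  exact Set.disjoint_left.1 h ha (hA' this)

end QuotientGroup

lemma smul_mul_coe_mul_coe {G : Type*} [Group G] (g : G) (A : Set G) (P : Subgroup G) :
    g • (A * P) * P = g • (A * P) := by
  rw [smul_mul_assoc, mul_assoc, coe_mul_coe P]

namespace convMap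

open QuotientGroup Finsupp

variable {G : Type*} [Group G] (M : Type*) [CommRing M] (B P : Subgroup G)

/-- `χ_{BP}` is the indicator of this set. -/
def imageMul : Set (G ⧸ P) := mk '' ((B : Set G) * (P : Set G))

lemma smul_imageMul_of_mem {b : G} (hb : b ∈ B) : b • imageMul B P = imageMul B P := by
  rw [imageMul, ← Set.image_smul_comm (mk : G → G ⧸ P) b _ fun _ => rfl, ← smul_mul_assoc,
    smul_coe_set hb]

lemma smul_imageMul (g : G) : g • imageMul B P = mk '' (g • ((B : Set G) * (P : Set G))) :=
  (Set.image_smul_comm (mk : G → G ⧸ P) g _ fun _ => rfl).symm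

lemma out_smul_imageMul (g : G) : (mk g : G ⧸ B).out • imageMul B P = g • imageMul B P := by
  obtain ⟨b, hb⟩ := mk_out_eq_mul B g
  rw [hb, mul_smul, smul_imageMul_of_mem B P b.2]

lemma eq_linearCombination :
    convMap M B P = linearCombination M fun x : G ⧸ B => (x.out • imageMul B P).indicator 1 := by
  funext φ y
  simp only [convMap, imageMul, linearCombination_apply, Finsupp.sum, Finset.sum_apply,
    Pi.smul_apply, Set.indicator_apply, Set.mem_smul_set_iff_inv_smul_mem, Pi.one_apply,
    smul_eq_mul, mul_ite, mul_one, mul_zero]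

lemma mapDomain_smul (g : G) (φ : (G ⧸ B) →₀ M) :
    convMap M B P (mapDomain (g • ·) φ) = fun y => convMap M B P φ (g⁻¹ • y) := by
  change _ = LinearMap.funLeft M M (g⁻¹ • ·) (convMap M B P φ)
  rw [eq_linearCombination, linearCombination_mapDomain, apply_linearCombination]
  congr 2 with x y
  induction x using QuotientGroup.induction_on with
  | H h =>
    change ((mk (g * h) : G ⧸ B).out • imageMul B P).indicator 1 y =
      ((mk h : G ⧸ B).out • imageMul B P).indicator 1 (g⁻¹ • y)
    rw [out_smul_imageMul, out_smul_imageMul, mul_smul]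
    simp only [Set.indicator_apply, Set.mem_smul_set_iff_inv_smul_mem, Pi.one_apply]

lemma pairwiseDisjoint_smul_imageMul {S : Set G}
    (hS : S.PairwiseDisjoint fun g => g • ((B : Set G) * (P : Set G))) :
    S.PairwiseDisjoint fun g => g • imageMul B P := fun g₁ h₁ g₂ h₂ hne => by
  simp only [smul_imageMul]
  exact disjoint_image_mk_of_mul_subset P (smul_mul_coe_mul_coe g₂ B P).le (hS h₁ h₂ hne)

lemma sum_single_mk_one (S : Finset G)
    (hS : (S : Set G).PairwiseDisjoint fun g => g • ((B : Set G) * (P : Set G))) :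
    convMap M B P (∑ g ∈ S, single (mk g) 1) =
      (mk '' ⋃ g ∈ S, g • ((B : Set G) * (P : Set G)) : Set (G ⧸ P)).indicator 1 := by
  rw [Set.image_iUnion₂]
  simp only [← smul_imageMul]
  rw [Finset.indicator_biUnion _ _ (pairwiseDisjoint_smul_imageMul B P hS), eq_linearCombination,
    map_sum]
  simp only [linearCombination_single, out_smul_imageMul, one_smul]
  ext y
  simp

lemma exists_eq_of_mem_span {f : G ⧸ P → M}
    (hf : f ∈ Submodule.span M
      {h : G ⧸ P → M | ∃ g : G, h = (mk '' (g • ((B : Set G) * (P : Set G)))).indicator 1}) :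
    ∃ φ : (G ⧸ B) →₀ M, convMap M B P φ = f := by
  rw [eq_linearCombination, ← LinearMap.mem_range, range_linearCombination]
  refine Submodule.span_mono ?_ hf
  rintro _ ⟨g, rfl⟩
  exact ⟨mk g, by rw [← smul_imageMul, ← out_smul_imageMul]⟩

end convMap

theorem H_of_chi_and_HI_surjective_general
    {G : Type*} [Group G] [TopologicalSpace G]
    (M : Type*) [CommRing M]
    (B BI P PI : Subgroup G)
    (S : Finset G)
    (hdisjoint : ∀ g₁ ∈ S, ∀ g₂ ∈ S,
      ((g₁ • ((B : Set G) * (P : Set G))) ∩ (g₂ • ((B : Set G) * (P : Set G)))).Nonempty →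
        g₁ = g₂)
    (hunion : (BI : Set G) * (PI : Set G) = ⋃ g ∈ S, g • ((B : Set G) * (P : Set G)))
    (hgen : ∀ f : G ⧸ PI → M, IsLocallyConstant f →
      f ∈ Submodule.span M
        {h : G ⧸ PI → M | ∃ g : G,
          h = Set.indicator (QuotientGroup.mk '' (g • ((BI : Set G) * (PI : Set G)))) 1}) :
    (convMap M B P (∑ g ∈ S, Finsupp.single (QuotientGroup.mk g : G ⧸ B) (1 : M)) =
      Set.indicator (QuotientGroup.mk '' ((BI : Set G) * (PI : Set G)) : Set (G ⧸ P)) 1) ∧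
    (∀ φ ψ : (G ⧸ BI) →₀ M, convMap M BI PI (φ + ψ) = convMap M BI PI φ + convMap M BI PI ψ) ∧
    (∀ (g : G) (φ : (G ⧸ BI) →₀ M),
      convMap M BI PI (Finsupp.mapDomain (fun z : G ⧸ BI => g • z) φ) =
        fun y => convMap M BI PI φ (g⁻¹ • y)) ∧
    (∀ f : G ⧸ PI → M, IsLocallyConstant f → ∃ φ : (G ⧸ BI) →₀ M, convMap M BI PI φ = f) := by
  have hS : (S : Set G).PairwiseDisjoint fun g => g • ((B : Set G) * (P : Set G)) :=
    fun g₁ h₁ g₂ h₂ hne => Set.disjoint_iff_inter_eq_empty.2 <|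
      Set.not_nonempty_iff_eq_empty.1 fun h => hne (hdisjoint g₁ h₁ g₂ h₂ h)
  refine ⟨?_, fun φ ψ => ?_, convMap.mapDomain_smul M BI PI,
    fun f hf => convMap.exists_eq_of_mem_span M BI PI (hgen f hf)⟩
  · rw [hunion]
    exact convMap.sum_single_mk_one M B P S hS
  · rw [convMap.eq_linearCombination, map_add]

/-- given (i) `B_I P_I = ∐_{g∈B_I/B} gBP` and (ii) that
`C^∞(G/P_I, M)` is generated as an `M[G]`-module by `χ_{B_I P_I}`, the map
`H` satisfies `H(χ_{B_I}) = χ_{B_I P_I}`, and the induced map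
`H_I : C_c^∞(G/B_I, M) → C^∞(G/P_I, M)` is additive, `G`-equivariant and
surjective (onto locally constant functions). -/
theorem H_of_chi_and_HI_surjective
    {G : Type*} [Group G] [TopologicalSpace G] [IsTopologicalGroup G]
    (M : Type*) [CommRing M]
    (B BI P PI : Subgroup G) (hBBI : B ≤ BI) (hPPI : P ≤ PI)
    (S : Finset G) (hS : (BI : Set G) = ⋃ g ∈ S, g • (B : Set G))
    (hSdisj : ∀ g₁ ∈ S, ∀ g₂ ∈ S,
      (QuotientGroup.mk g₁ : G ⧸ B) = QuotientGroup.mk g₂ → g₁ = g₂)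
    (hdisjoint : ∀ g₁ ∈ S, ∀ g₂ ∈ S,
      ((g₁ • ((B : Set G) * (P : Set G))) ∩ (g₂ • ((B : Set G) * (P : Set G)))).Nonempty →
        g₁ = g₂)
    (hunion : (BI : Set G) * (PI : Set G) = ⋃ g ∈ S, g • ((B : Set G) * (P : Set G)))
    (hgen : ∀ f : G ⧸ PI → M, IsLocallyConstant f →
      f ∈ Submodule.span M
        {h : G ⧸ PI → M | ∃ g : G,
          h = Set.indicator (QuotientGroup.mk '' (g • ((BI : Set G) * (PI : Set G)))) 1}) :
    (convMap M B P (∑ g ∈ S, Finsupp.single (QuotientGroup.mk g : G ⧸ B) (1 : M)) =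
      Set.indicator (QuotientGroup.mk '' ((BI : Set G) * (PI : Set G)) : Set (G ⧸ P)) 1) ∧
    (∀ φ ψ : (G ⧸ BI) →₀ M, convMap M BI PI (φ + ψ) = convMap M BI PI φ + convMap M BI PI ψ) ∧
    (∀ (g : G) (φ : (G ⧸ BI) →₀ M),
      convMap M BI PI (Finsupp.mapDomain (fun z : G ⧸ BI => g • z) φ) =
        fun y => convMap M BI PI φ (g⁻¹ • y)) ∧
    (∀ f : G ⧸ PI → M, IsLocallyConstant f → ∃ φ : (G ⧸ BI) →₀ M, convMap M BI PI φ = f) :=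
  H_of_chi_and_HI_surjective_general M B BI P PI S hdisjoint hunion hgen
end
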